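/- Let S = ℂ[u,e]/⟨u^2, (-8u+e)·e⟩ and let π : S → ℂ[u]/⟨u^2⟩ be the ring map sending u ↦ u and e ↦ 0. Then the element (-8u + e)·u ∈ S is nonzero and lies in the kernel of π restricted to the ideal generated by (-8u+e). In particular the restriction of π to the ideal (-8u+e)·S is not injective. -/
import Mathlib


open MvPolynomial

/-- The ideal `⟨u², (-8u+e)·e⟩` in `ℂ[u,e]` (with `u = X 0`, `e = X 1`), presenting the
cohomology of the twisted sector `ℙ(O_{ℙ(2,2)} ⊕ O_{ℙ(2,2)}(-8))`. -/
noncomputable def I10 : Ideal (MvPolynomial (Fin 2) ℂ) :=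
  Ideal.span {X 0 ^ 2, (C (-8 : ℂ) * X 0 + X 1) * X 1}

/-- The ideal `⟨u²⟩` in `ℂ[u]`, presenting the cohomology of `O_{ℙ(2,2)}(-8)`. -/
noncomputable def J10 : Ideal (Polynomial ℂ) :=
  Ideal.span {Polynomial.X ^ 2}

set_option synthInstance.maxHeartbeats 1000000 in
noncomputable abbrev A10 : Type := DualNumber (DualNumber ℂ)

set_option synthInstance.maxHeartbeats 1000000
set_option maxHeartbeats 1000000

noncomputable def a10 : A10 := TrivSqZeroExt.inl DualNumber.eps
noncomputable def m10 : A10 := DualNumber.eps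

lemma a10_sq : a10 * a10 = 0 := by
  show TrivSqZeroExt.inl DualNumber.eps * TrivSqZeroExt.inl DualNumber.eps =
    (0 : DualNumber (DualNumber ℂ))
  rw [← TrivSqZeroExt.inl_mul, DualNumber.eps_mul_eps, TrivSqZeroExt.inl_zero]

lemma m10_sq : m10 * m10 = 0 := DualNumber.eps_mul_eps

lemma a10_mul_m10 : a10 * m10 = TrivSqZeroExt.inr DualNumber.eps := by
  show TrivSqZeroExt.inl DualNumber.eps * TrivSqZeroExt.inr (1 : DualNumber ℂ) = _
  rw [TrivSqZeroExt.inl_mul_inr, smul_eq_mul, mul_one]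

lemma a10_mul_m10_ne : a10 * m10 ≠ 0 := by
  rw [a10_mul_m10]
  intro h
  have h2 := TrivSqZeroExt.inr_injective (M := DualNumber ℂ)
    (R := DualNumber ℂ) (h.trans (TrivSqZeroExt.inr_zero _).symm)
  have : (DualNumber.eps : DualNumber ℂ).snd = 0 := by rw [h2]; rfl
  rw [DualNumber.snd_eps] at this
  exact one_ne_zero this

/-- Evaluation map killing `I10` but not `(-8u+e)·u`. -/
noncomputable def φ10 : MvPolynomial (Fin 2) ℂ →ₐ[ℂ] A10 :=
  aeval ![a10, 4 * a10 + m10]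

lemma φ10_X0 : φ10 (X 0) = a10 := by simp [φ10]
lemma φ10_X1 : φ10 (X 1) = 4 * a10 + m10 := by simp [φ10]

lemma φ10_C8 : φ10 (C (-8 : ℂ)) = (-8 : A10) := by
  have : φ10 (C (-8 : ℂ)) = algebraMap ℂ A10 (-8) := by simp [φ10]
  rw [this, map_neg, map_ofNat]

lemma φ10_ker : I10 ≤ RingHom.ker φ10.toRingHom := by
  rw [I10, Ideal.span_le]
  rintro p hp
  simp only [Set.mem_insert_iff, Set.mem_singleton_iff] at hp
  rcases hp with rfl | rfl
  · show φ10 (X 0 ^ 2) = 0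
    rw [map_pow, φ10_X0, sq, a10_sq]
  · show φ10 ((C (-8 : ℂ) * X 0 + X 1) * X 1) = 0
    rw [map_mul, map_add, map_mul, φ10_C8, φ10_X0, φ10_X1]
    have : ((-8 : A10) * a10 + (4 * a10 + m10)) * (4 * a10 + m10)
        = m10 * m10 - 16 * (a10 * a10) := by ring
    rw [this, m10_sq, a10_sq]
    ring

noncomputable def ψ10 : (MvPolynomial (Fin 2) ℂ ⧸ I10) →+* A10 :=
  Ideal.Quotient.lift I10 φ10.toRingHom (fun _ hx => φ10_ker hx)

lemma key10 : Ideal.Quotient.mk I10 ((C (-8 : ℂ) * X 0 + X 1) * X 0) ≠ 0 := by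
  intro h
  have h2 : ψ10 (Ideal.Quotient.mk I10 ((C (-8 : ℂ) * X 0 + X 1) * X 0)) = 0 := by
    rw [h, map_zero]
  have h3 : φ10 ((C (-8 : ℂ) * X 0 + X 1) * X 0) = 0 := h2
  rw [map_mul, map_add, map_mul, φ10_C8, φ10_X0, φ10_X1] at h3
  have h4 : ((-8 : A10) * a10 + (4 * a10 + m10)) * a10
      = a10 * m10 - 4 * (a10 * a10) := by ring
  rw [h4, a10_sq] at h3
  apply a10_mul_m10_ne
  rw [← sub_zero (a10 * m10)]
  simpa using h3

/-- For the ring map `π : ℂ[u,e]/⟨u², (-8u+e)e⟩ → ℂ[u]/⟨u²⟩` with `π(u) = u`, `π(e) = 0`,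
the element `(-8u + e)·u` is nonzero, lies in the kernel of `π`, and belongs to the ideal
generated by `-8u + e`; in particular `π` restricted to that ideal is not injective. -/
theorem stmt10 (π : (MvPolynomial (Fin 2) ℂ ⧸ I10) →ₐ[ℂ] (Polynomial ℂ ⧸ J10))
    (hπu : π (Ideal.Quotient.mk I10 (X 0)) = Ideal.Quotient.mk J10 Polynomial.X)
    (hπe : π (Ideal.Quotient.mk I10 (X 1)) = 0) :
    Ideal.Quotient.mk I10 ((C (-8 : ℂ) * X 0 + X 1) * X 0) ≠ 0 ∧
    π (Ideal.Quotient.mk I10 ((C (-8 : ℂ) * X 0 + X 1) * X 0)) = 0 ∧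
    Ideal.Quotient.mk I10 ((C (-8 : ℂ) * X 0 + X 1) * X 0) ∈
      Ideal.span {Ideal.Quotient.mk I10 (C (-8 : ℂ) * X 0 + X 1)} ∧
    ¬ Set.InjOn π (Ideal.span {Ideal.Quotient.mk I10 (C (-8 : ℂ) * X 0 + X 1)} :
        Set (MvPolynomial (Fin 2) ℂ ⧸ I10)) := by
  have hC : π (Ideal.Quotient.mk I10 (C (-8 : ℂ))) = algebraMap ℂ _ (-8 : ℂ) := by
    have : (Ideal.Quotient.mk I10 (C (-8 : ℂ))) = algebraMap ℂ _ (-8 : ℂ) := rfl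
    rw [this, AlgHom.commutes]
  have hXsq : (Ideal.Quotient.mk J10 Polynomial.X) * (Ideal.Quotient.mk J10 Polynomial.X)
      = 0 := by
    rw [← map_mul, ← sq, Ideal.Quotient.eq_zero_iff_mem, J10]
    exact Ideal.subset_span rfl
  have hker : π (Ideal.Quotient.mk I10 ((C (-8 : ℂ) * X 0 + X 1) * X 0)) = 0 := by
    rw [map_mul, map_add, map_mul, map_mul, map_add, map_mul, hC, hπu, hπe]
    rw [add_zero, mul_assoc, hXsq, mul_zero]
  have hmem : Ideal.Quotient.mk I10 ((C (-8 : ℂ) * X 0 + X 1) * X 0) ∈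
      Ideal.span {Ideal.Quotient.mk I10 (C (-8 : ℂ) * X 0 + X 1)} := by
    rw [Ideal.mem_span_singleton]
    exact ⟨Ideal.Quotient.mk I10 (X 0), (map_mul _ _ _)⟩
  refine ⟨key10, hker, hmem, fun hinj => ?_⟩
  exact key10 (hinj hmem (Ideal.zero_mem _) (by rw [hker, map_zero]))
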